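/- Let g̃₁, g̃₂ : ℝ→ℝ be Lipschitz, 1-periodic functions with zero mean over [0,1], let λ₁, λ₂ ∈ ℝ, and suppose g̃₁(x)+λ₁ ≤ g̃₂(x)+λ₂ for all x (so that T̃₁ ≤ T̃₂ in Le Calvez's order), where T̃ᵢ(x,y) = (x+y+g̃ᵢ(x)+λᵢ, y+g̃ᵢ(x)+λᵢ). Then for every triplet (s,p,q) ∈ ℤ×ℤ×ℕ*: if (s,p,q) is positive for T̃₁ then it is positive for T̃₂, and if (s,p,q) is negative for T̃₂ then it is negative for T̃₁. -/

import Mathlib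

/-! Writing `G = g̃ + λ`, the `x`-coordinates of a `T̃`-orbit solve the discrete Euler–Lagrange
equation `x_{k+2} - 2 x_{k+1} + x_k = G(x_{k+1})`, every solution of it is an orbit, and
`y_k = x_k - x_{k-1}`. If `G₁ ≤ G₂`, the `x`-coordinates of a `T̃₂`-orbit form a subsolution of
the `G₁`-equation; minimizing the `G₁`-action between them and a concave barrier with the same
endpoints gives a `T̃₁`-orbit with the same `x_0` and `x_q` lying above it, which therefore starts
higher and arrives lower. Symmetrically every `T̃₁`-orbit has a `T̃₂`-orbit with the same endpoints
below it. So over every point of the circle the fibre of `K(s, q)` moves down and the fibre of its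
image moves up from `T̃₁` to `T̃₂`. -/

open Filter Topology

noncomputable section

/-- The cylinder (ℝ/ℤ) × ℝ. -/
abbrev Cyl : Type := AddCircle (1:ℝ) × ℝ

/-- Projection π₁ : ℝ² → (ℝ/ℤ)×ℝ, (x,y) ↦ (x mod 1, y). -/
def projCyl (Z : ℝ × ℝ) : Cyl := ((Z.1 : AddCircle (1:ℝ)), Z.2)

/-- The lift T̃(x,y) = (x + y + g(x), y + g(x)). -/
def liftMap (g : ℝ → ℝ) (Z : ℝ × ℝ) : ℝ × ℝ := (Z.1 + Z.2 + g Z.1, Z.2 + g Z.1)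

/-- The vertical rotation set: all limits of convergent sequences
    (p₂(T̃^{nᵢ}(Zᵢ)) − p₂(Zᵢ))/nᵢ with nᵢ → ∞. -/
def vRotSet (T : ℝ × ℝ → ℝ × ℝ) : Set ℝ :=
  {ω | ∃ (Z : ℕ → ℝ × ℝ) (n : ℕ → ℕ), Tendsto n atTop atTop ∧
    Tendsto (fun i => ((T^[n i] (Z i)).2 - (Z i).2) / (n i : ℝ)) atTop (𝓝 ω)}

/-- ρ_V^max -/
def rhoVMax (T : ℝ × ℝ → ℝ × ℝ) : ℝ := sSup (vRotSet T)

/-- ρ_V^min -/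
def rhoVMin (T : ℝ × ℝ → ℝ × ℝ) : ℝ := sInf (vRotSet T)

/-- A representative in [0,1) of a point of ℝ/ℤ. -/
def rep (x : AddCircle (1:ℝ)) : ℝ := (AddCircle.equivIco 1 0 x : ℝ)

/-- The cylinder map induced by the lift (x,y) ↦ (x+y+g(x), y+g(x)) for 1-periodic g. -/
def inducedMap (g : ℝ → ℝ) (z : Cyl) : Cyl :=
  (z.1 + ((z.2 + g (rep z.1) : ℝ) : AddCircle (1:ℝ)), z.2 + g (rep z.1))

/-- A rotational invariant curve of a cylinder homeomorphism `S`: the image Γ of a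
continuous injective map γ : ℝ/ℤ → (ℝ/ℤ)×ℝ such that p₁∘γ has degree one
(expressed via a continuous lift γt with γt(t+1) = γt(t)+(1,0)) and S(Γ) = Γ. -/
def IsRIC (S : Cyl → Cyl) (Γ : Set Cyl) : Prop :=
  ∃ γ : AddCircle (1:ℝ) → Cyl,
    Continuous γ ∧ Function.Injective γ ∧
    (∃ γt : ℝ → ℝ × ℝ, Continuous γt ∧ (∀ t, γt (t + 1) = γt t + (1, 0)) ∧
      ∀ t : ℝ, γ (t : AddCircle (1:ℝ)) = projCyl (γt t)) ∧
    Γ = Set.range γ ∧ S '' Γ = Γ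

/-- K(s,q) = π₁(K̃(s,q)) where K̃(s,q) = {(x,y) : p₁(T̃^q(x,y)) = x + s}. -/
def Kset (g : ℝ → ℝ) (s : ℤ) (q : ℕ) : Set Cyl :=
  projCyl '' {Z : ℝ × ℝ | ((liftMap g)^[q] Z).1 = Z.1 + s}

def muMinus (g : ℝ → ℝ) (s : ℤ) (q : ℕ) (x : AddCircle (1:ℝ)) : ℝ :=
  sInf {y : ℝ | (x, y) ∈ Kset g s q}

def muPlus (g : ℝ → ℝ) (s : ℤ) (q : ℕ) (x : AddCircle (1:ℝ)) : ℝ :=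
  sSup {y : ℝ | (x, y) ∈ Kset g s q}

def nuMinus (g : ℝ → ℝ) (s : ℤ) (q : ℕ) (x : AddCircle (1:ℝ)) : ℝ :=
  sInf {y : ℝ | (x, y) ∈ (inducedMap g)^[q] '' Kset g s q}

def nuPlus (g : ℝ → ℝ) (s : ℤ) (q : ℕ) (x : AddCircle (1:ℝ)) : ℝ :=
  sSup {y : ℝ | (x, y) ∈ (inducedMap g)^[q] '' Kset g s q}

/-- C separates the cylinder: the far upper and lower halves lie in two different
connected components of the complement. -/
def SeparatesCyl (C : Set Cyl) : Prop :=
  ∃ M : ℝ, 0 < M ∧ ∃ A ∈ Cᶜ, ∃ B ∈ Cᶜ,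
    {z : Cyl | M ≤ z.2} ⊆ connectedComponentIn Cᶜ A ∧
    {z : Cyl | z.2 ≤ -M} ⊆ connectedComponentIn Cᶜ B ∧
    connectedComponentIn Cᶜ A ≠ connectedComponentIn Cᶜ B

/-- The torus T² = (ℝ/ℤ)². -/
abbrev Torus : Type := AddCircle (1:ℝ) × AddCircle (1:ℝ)

def projTorus (Z : ℝ × ℝ) : Torus := ((Z.1 : AddCircle (1:ℝ)), (Z.2 : AddCircle (1:ℝ)))

/-- The torus map induced by the lift for 1-periodic g. -/
def torusMapOf (g : ℝ → ℝ) (z : Torus) : Torus :=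
  (z.1 + z.2 + ((g (rep z.1) : ℝ) : AddCircle (1:ℝ)), z.2 + ((g (rep z.1) : ℝ) : AddCircle (1:ℝ)))

/-- A triplet (s,p,q) is positive for the map determined by the effective function gg. -/
def IsPositiveTriplet (gg : ℝ → ℝ) (s p : ℤ) (q : ℕ) : Prop :=
  ∀ x : AddCircle (1:ℝ), (p : ℝ) < nuMinus gg s q x - muPlus gg s q x

/-- A triplet (s,p,q) is negative for the map determined by the effective function gg. -/
def IsNegativeTriplet (gg : ℝ → ℝ) (s p : ℤ) (q : ℕ) : Prop :=
  ∀ x : AddCircle (1:ℝ), nuPlus gg s q x - muMinus gg s q x < (p : ℝ)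

open Function Set

theorem IsMinOn.sub_mul_nonneg_of_hasDerivAt {f : ℝ → ℝ} {s : Set ℝ} {x y d : ℝ}
    (h : IsMinOn f s x) (hf : HasDerivAt f d x) (hxy : segment ℝ x y ⊆ s) : 0 ≤ (y - x) * d := by
  simpa [mul_comm] using h.localize.hasFDerivWithinAt_nonneg hf.hasFDerivAt.hasFDerivWithinAt
    (sub_mem_posTangentConeAt_of_segment_subset hxy)

theorem IsMinOn.comp_update {ι α β : Type*} [DecidableEq ι] [Preorder α] [Preorder β]
    {f : (ι → α) → β} {a b v : ι → α} (h : IsMinOn f (Icc a b) v) (hv : v ∈ Icc a b) (i : ι) :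
    IsMinOn (fun t => f (update v i t)) (Icc (a i) (b i)) (v i) := fun t ht => by
  show f (update v i (v i)) ≤ _
  rw [update_eq_self]
  refine h ⟨fun j => ?_, fun j => ?_⟩ <;> rcases eq_or_ne j i with rfl | hj <;>
    simp [*, hv.1 j, hv.2 j, ht.1, ht.2]

namespace TwistMap

def secondDiff (v : ℕ → ℝ) (k : ℕ) : ℝ := v (k + 2) - 2 * v (k + 1) + v k

def IsSubsolution (G : ℝ → ℝ) (q : ℕ) (v : ℕ → ℝ) : Prop :=
  ∀ k, k + 2 ≤ q → G (v (k + 1)) ≤ secondDiff v k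

def IsSupersolution (G : ℝ → ℝ) (q : ℕ) (v : ℕ → ℝ) : Prop :=
  ∀ k, k + 2 ≤ q → secondDiff v k ≤ G (v (k + 1))

def IsSolution (G : ℝ → ℝ) (q : ℕ) (v : ℕ → ℝ) : Prop :=
  ∀ k, k + 2 ≤ q → secondDiff v k = G (v (k + 1))

variable {G : ℝ → ℝ}

theorem exists_le_secondDiff_le (w : ℕ → ℝ) (q : ℕ) (C : ℝ) :
    ∃ P : ℕ → ℝ, P 0 = w 0 ∧ P q = w q ∧ (∀ k ≤ q, w k ≤ P k) ∧ ∀ k, secondDiff P k ≤ C := by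
  -- the chord of `w` over `[0, q]` plus a parabola `c k (q - k)`, whose second difference is `-2c`
  let l : ℕ → ℝ := fun k => w 0 + (w q - w 0) * k / q
  obtain ⟨c, hC, hc⟩ : ∃ c : ℝ, -2 * c ≤ C ∧ ∀ k ≤ q, |w k - l k| ≤ c :=
    ⟨|C| / 2 + ∑ k ∈ Finset.range (q + 1), |w k - l k|, by
      have := Finset.sum_nonneg (s := Finset.range (q + 1)) fun k _ => abs_nonneg (w k - l k)
      linarith [neg_abs_le C], fun k hk => by
      have := Finset.single_le_sum (f := fun k => |w k - l k|) (fun _ _ => abs_nonneg _)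
        (Finset.mem_range.2 (Nat.lt_succ_of_le hk))
      linarith [abs_nonneg C]⟩
  have hlq : l q = w q := by
    rcases eq_or_ne q 0 with rfl | hq
    · simp [l]
    · simp only [l]; field_simp; ring
  refine ⟨fun k => l k + c * k * (q - k), by simp [l], by simp [hlq], fun k hk => ?_, fun k => ?_⟩
  · rcases Nat.eq_zero_or_pos k with rfl | hk0
    · simp [l]
    rcases hk.eq_or_lt with rfl | hkq
    · simp [hlq]
    have h1 : (1 : ℝ) ≤ k := by exact_mod_cast hk0
    have h2 : (1 : ℝ) ≤ q - k := by
      have : ((k + 1 : ℕ) : ℝ) ≤ q := by exact_mod_cast hkq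
      push_cast at this; linarith
    have := (le_abs_self _).trans (hc k hk)
    have := (abs_nonneg _).trans (hc k hk)
    show w k ≤ l k + c * k * (q - k)
    nlinarith [mul_le_mul h1 h2 zero_le_one (by linarith)]
  · calc secondDiff (fun k => l k + c * k * (q - k)) k = -2 * c := by
          simp only [secondDiff, l]; push_cast; ring
      _ ≤ C := hC

theorem exists_isSupersolution_ge (hG : BddBelow (range G)) (q : ℕ) (w : ℕ → ℝ) :
    ∃ P, IsSupersolution G q P ∧ P 0 = w 0 ∧ P q = w q ∧ ∀ k ≤ q, w k ≤ P k := by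
  obtain ⟨C, hC⟩ := hG
  obtain ⟨P, hP0, hPq, hwP, hP⟩ := exists_le_secondDiff_le w q C
  exact ⟨P, fun k _ => (hP k).trans (hC ⟨_, rfl⟩), hP0, hPq, hwP⟩

theorem exists_isSubsolution_le (hG : BddAbove (range G)) (q : ℕ) (w : ℕ → ℝ) :
    ∃ P, IsSubsolution G q P ∧ P 0 = w 0 ∧ P q = w q ∧ ∀ k ≤ q, P k ≤ w k := by
  obtain ⟨C, hC⟩ := hG
  obtain ⟨P, hP0, hPq, hwP, hP⟩ := exists_le_secondDiff_le (-w) q (-C)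
  refine ⟨-P, fun k _ => ?_, by simp [hP0], by simp [hPq],
    fun k hk => by simpa using neg_le.1 (hwP k hk)⟩
  have := hP k
  simp only [secondDiff, Pi.neg_apply] at this ⊢
  linarith [hC ⟨-P (k + 1), rfl⟩]

noncomputable def action (U : ℝ → ℝ) (q : ℕ) (v : ℕ → ℝ) : ℝ :=
  ∑ i ∈ Finset.range q, ((v (i + 1) - v i) ^ 2 / 2 + U (v i))

theorem continuous_action {U : ℝ → ℝ} (hU : Continuous U) (q : ℕ) : Continuous (action U q) := by
  unfold action; fun_prop

theorem hasDerivAt_action_update {U : ℝ → ℝ} {d u : ℝ} (hU : HasDerivAt U d u) (v : ℕ → ℝ)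
    {q k : ℕ} (hk : k + 2 ≤ q) :
    HasDerivAt (fun t => action U q (update v (k + 1) t))
      (d - secondDiff (update v (k + 1) u) k) u := by
  have hterm : ∀ i, HasDerivAt
      (fun t => (update v (k + 1) t (i + 1) - update v (k + 1) t i) ^ 2 / 2
        + U (update v (k + 1) t i))
      (if i = k then u - v k else if i = k + 1 then u - v (k + 2) + d else 0) u := by
    intro i
    by_cases hik : i = k
    · subst hik
      simp only [update_self, update_of_ne (Nat.succ_ne_self i).symm, if_true]
      simpa using (((hasDerivAt_id u).sub_const (v i)).pow 2).div_const 2 |>.add_const (U (v i))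
    by_cases hik' : i = k + 1
    · subst hik'
      simp only [update_self, update_of_ne (Nat.succ_ne_self (k + 1)), if_neg hik, if_true]
      exact ((((hasDerivAt_id u).const_sub (v (k + 2))).pow 2).div_const 2 |>.add hU).congr_deriv
        (by simp; ring)
    · simp only [update_of_ne (by omega : i + 1 ≠ k + 1), update_of_ne hik', if_neg hik,
        if_neg hik']
      exact hasDerivAt_const _ _
  refine (HasDerivAt.fun_sum (u := Finset.range q) fun i _ => hterm i).congr_deriv ?_
  rw [Finset.sum_eq_add_of_mem k (k + 1) (by simp; omega) (by simp; omega) (by omega)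
    (fun i _ hi => by simp [hi.1, hi.2])]
  simp [secondDiff]
  ring

theorem exists_isSolution_between (hG : Continuous G) {q : ℕ} {w P : ℕ → ℝ}
    (hw : IsSubsolution G q w) (hP : IsSupersolution G q P) (hwP : ∀ k ≤ q, w k ≤ P k) :
    ∃ v, IsSolution G q v ∧ ∀ k ≤ q, w k ≤ v k ∧ v k ≤ P k := by
  -- `v` minimizes the action over the order interval `[w, w ⊔ P]`. Where a constraint is active,
  -- the one-sided derivative gives only half of the Euler–Lagrange equation, and the comparison
  -- with the sub- or supersolution touching `v` there gives the other half.
  let U t := ∫ x in (0 : ℝ)..t, G x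
  have hU : ∀ t, HasDerivAt U (G t) t := fun t => (hG.integral_hasStrictDerivAt 0 t).hasDerivAt
  have hUc : Continuous U := continuous_iff_continuousAt.2 fun t => (hU t).continuousAt
  obtain ⟨v, hv, hmin⟩ := (isCompact_Icc (a := w) (b := w ⊔ P)).exists_isMinOn
    (nonempty_Icc.2 le_sup_left) (continuous_action hUc q).continuousOn
  have hvP : ∀ k ≤ q, v k ≤ P k := fun k hk => (hv.2 k).trans (max_le (hwP k hk) le_rfl)
  refine ⟨v, fun k hk => ?_, fun k hk => ⟨hv.1 k, hvP k hk⟩⟩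
  have hψ := hmin.comp_update hv (k + 1)
  have hd := hasDerivAt_action_update (hU (v (k + 1))) v hk
  rw [update_eq_self] at hd
  apply le_antisymm
  · rcases (hvP (k + 1) (by omega)).lt_or_eq with hlt | heq
    · refine sub_nonneg.1 (nonneg_of_mul_nonneg_right (hψ.sub_mul_nonneg_of_hasDerivAt hd ?_)
        (sub_pos.2 hlt))
      exact (segment_subset_Icc hlt.le).trans (Icc_subset_Icc (hv.1 _) le_sup_right)
    · have := hP k hk
      simp only [secondDiff, heq] at this ⊢
      linarith [hvP k (by omega), hvP (k + 2) hk]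
  · rcases (hv.1 (k + 1)).lt_or_eq with hlt | heq
    · refine sub_nonpos.1 (nonpos_of_mul_nonneg_right (hψ.sub_mul_nonneg_of_hasDerivAt hd ?_)
        (sub_neg.2 hlt))
      rw [segment_symm]
      exact (segment_subset_Icc hlt.le).trans (Icc_subset_Icc_right (hv.2 _))
    · have := hw k hk
      simp only [secondDiff, ← heq] at this ⊢
      linarith [hv.1 k, hv.1 (k + 2)]

theorem continuous_liftMap (hG : Continuous G) : Continuous (liftMap G) := by
  unfold liftMap; fun_prop

theorem iterate_liftMap_succ (Z : ℝ × ℝ) (k : ℕ) :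
    (liftMap G)^[k + 1] Z = (((liftMap G)^[k] Z).1 + ((liftMap G)^[k] Z).2
      + G ((liftMap G)^[k] Z).1, ((liftMap G)^[k] Z).2 + G ((liftMap G)^[k] Z).1) := by
  rw [iterate_succ_apply']; rfl

theorem iterate_liftMap_snd (Z : ℝ × ℝ) {k : ℕ} (hk : 1 ≤ k) :
    ((liftMap G)^[k] Z).2 = ((liftMap G)^[k] Z).1 - ((liftMap G)^[k - 1] Z).1 := by
  obtain ⟨k, rfl⟩ := Nat.exists_eq_add_of_le' hk
  rw [iterate_liftMap_succ, Nat.add_sub_cancel]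
  ring

theorem isSolution_iterate_liftMap (Z : ℝ × ℝ) (q : ℕ) :
    IsSolution G q fun k => ((liftMap G)^[k] Z).1 := fun k _ => by
  simp only [secondDiff, iterate_liftMap_succ]
  ring

theorem iterate_liftMap_of_isSolution {q : ℕ} {v : ℕ → ℝ} (hv : IsSolution G q v) :
    ∀ k ≤ q, ((liftMap G)^[k] (v 0, v 1 - v 0 - G (v 0))).1 = v k := by
  intro k
  induction k using Nat.strong_induction_on with
  | _ k ih =>
    rcases k with _ | _ | k
    · simp
    · intro; simp [liftMap]; ring
    · intro hk
      have h := isSolution_iterate_liftMap (G := G) (v 0, v 1 - v 0 - G (v 0)) (k + 2) k le_rfl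
      have hvk := hv k hk
      simp only [secondDiff] at h hvk
      rw [ih k (by omega) (by omega), ih (k + 1) (by omega) (by omega)] at h
      linarith

theorem exists_ge_iterate_liftMap {G₁ G₂ : ℝ → ℝ} (hG₁ : Continuous G₁)
    (hb : BddBelow (range G₁)) (hle : ∀ x, G₁ x ≤ G₂ x) {q : ℕ} (hq : 1 ≤ q) (a y : ℝ) :
    ∃ y', y ≤ y' ∧ ((liftMap G₁)^[q] (a, y')).1 = ((liftMap G₂)^[q] (a, y)).1 ∧
      ((liftMap G₁)^[q] (a, y')).2 ≤ ((liftMap G₂)^[q] (a, y)).2 := by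
  let w k := ((liftMap G₂)^[k] (a, y)).1
  have hw : IsSubsolution G₁ q w := fun k hk =>
    (hle _).trans (isSolution_iterate_liftMap (a, y) q k hk).ge
  obtain ⟨P, hP, hP0, hPq, hwP⟩ := exists_isSupersolution_ge hb q w
  obtain ⟨v, hv, hwvP⟩ := exists_isSolution_between hG₁ hw hP hwP
  have hv0 : v 0 = a :=
    le_antisymm ((hwvP 0 (Nat.zero_le q)).2.trans_eq hP0) (hwvP 0 (Nat.zero_le q)).1
  have hvq : v q = w q := le_antisymm ((hwvP q le_rfl).2.trans_eq hPq) (hwvP q le_rfl).1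
  have hx := iterate_liftMap_of_isSolution hv
  rw [hv0] at hx
  refine ⟨v 1 - a - G₁ a, ?_, by rw [hx q le_rfl, hvq], ?_⟩
  · have := (hwvP 1 hq).1
    simp only [w, iterate_one, liftMap] at this
    linarith [hle a]
  · rw [iterate_liftMap_snd _ hq, iterate_liftMap_snd _ hq, hx q le_rfl, hx (q - 1) (by omega),
      hvq]
    linarith [(hwvP (q - 1) (by omega)).1]

theorem exists_le_iterate_liftMap {G₁ G₂ : ℝ → ℝ} (hG₂ : Continuous G₂)
    (hb : BddAbove (range G₂)) (hle : ∀ x, G₁ x ≤ G₂ x) {q : ℕ} (hq : 1 ≤ q) (a y : ℝ) :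
    ∃ y', y' ≤ y ∧ ((liftMap G₂)^[q] (a, y')).1 = ((liftMap G₁)^[q] (a, y)).1 ∧
      ((liftMap G₁)^[q] (a, y)).2 ≤ ((liftMap G₂)^[q] (a, y')).2 := by
  let w k := ((liftMap G₁)^[k] (a, y)).1
  have hw : IsSupersolution G₂ q w := fun k hk =>
    (isSolution_iterate_liftMap (a, y) q k hk).le.trans (hle _)
  obtain ⟨P, hP, hP0, hPq, hPw⟩ := exists_isSubsolution_le hb q w
  obtain ⟨v, hv, hPvw⟩ := exists_isSolution_between hG₂ hP hw hPw
  have hv0 : v 0 = a :=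
    le_antisymm (hPvw 0 (Nat.zero_le q)).2 (hP0.symm.trans_le (hPvw 0 (Nat.zero_le q)).1)
  have hvq : v q = w q := le_antisymm (hPvw q le_rfl).2 (hPq.symm.trans_le (hPvw q le_rfl).1)
  have hx := iterate_liftMap_of_isSolution hv
  rw [hv0] at hx
  refine ⟨v 1 - a - G₂ a, ?_, by rw [hx q le_rfl, hvq], ?_⟩
  · have := (hPvw 1 hq).2
    simp only [w, iterate_one, liftMap] at this
    linarith [hle a]
  · rw [iterate_liftMap_snd _ hq, iterate_liftMap_snd _ hq, hx q le_rfl, hx (q - 1) (by omega),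
      hvq]
    linarith [(hPvw (q - 1) (by omega)).2]

theorem abs_iterate_liftMap_snd_sub_le {C : ℝ} (hC : ∀ x, |G x| ≤ C) (Z : ℝ × ℝ) (k : ℕ) :
    |((liftMap G)^[k] Z).2 - Z.2| ≤ k * C := by
  induction k with
  | zero => simp
  | succ k ih =>
    rw [iterate_liftMap_succ, add_sub_right_comm]
    push_cast
    linarith [abs_add_le (((liftMap G)^[k] Z).2 - Z.2) (G ((liftMap G)^[k] Z).1),
      hC ((liftMap G)^[k] Z).1]

theorem abs_iterate_liftMap_fst_sub_le {C : ℝ} (hC : ∀ x, |G x| ≤ C) (Z : ℝ × ℝ) (k : ℕ) :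
    |((liftMap G)^[k] Z).1 - Z.1 - k * Z.2| ≤ k ^ 2 * C := by
  have hC0 : 0 ≤ C := (abs_nonneg _).trans (hC 0)
  induction k with
  | zero => simp
  | succ k ih =>
    have h := abs_iterate_liftMap_snd_sub_le hC Z (k + 1)
    rw [iterate_liftMap_snd Z (Nat.le_add_left 1 k), Nat.add_sub_cancel] at h
    have := abs_add_le (((liftMap G)^[k] Z).1 - Z.1 - k * Z.2)
      (((liftMap G)^[k + 1] Z).1 - ((liftMap G)^[k] Z).1 - Z.2)
    push_cast at h ⊢
    calc _ = |((liftMap G)^[k] Z).1 - Z.1 - k * Z.2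
          + (((liftMap G)^[k + 1] Z).1 - ((liftMap G)^[k] Z).1 - Z.2)| := by ring_nf
      _ ≤ k ^ 2 * C + (k + 1) * C := by linarith
      _ ≤ (k + 1) ^ 2 * C := by nlinarith [(k.cast_nonneg : (0 : ℝ) ≤ k)]

theorem continuous_iterate_liftMap_mk (hG : Continuous G) (q : ℕ) (a : ℝ) :
    Continuous fun y => (liftMap G)^[q] (a, y) :=
  ((continuous_liftMap hG).iterate q).comp (Continuous.prodMk_right a)

def liftFiber (G : ℝ → ℝ) (s : ℤ) (q : ℕ) (a : ℝ) : Set ℝ :=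
  {y | ((liftMap G)^[q] (a, y)).1 = a + s}

theorem isCompact_liftFiber_and_nonempty (hG : Continuous G) (hb : Bornology.IsBounded (range G))
    (s : ℤ) {q : ℕ} (hq : 1 ≤ q) (a : ℝ) :
    IsCompact (liftFiber G s q a) ∧ (liftFiber G s q a).Nonempty := by
  obtain ⟨C, hC⟩ := isBounded_iff_forall_norm_le.1 hb
  replace hC x : |G x| ≤ C := hC _ ⟨x, rfl⟩
  set f : ℝ → ℝ := fun y => ((liftMap G)^[q] (a, y)).1
  have hf : Continuous f := continuous_fst.comp (continuous_iterate_liftMap_mk hG q a)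
  have hq' : (0 : ℝ) < q := by exact_mod_cast hq
  have hbound (y : ℝ) : |f y - a - q * y| ≤ q ^ 2 * C := abs_iterate_liftMap_fst_sub_le hC (a, y) q
  have htop : Tendsto f atTop atTop :=
    tendsto_atTop_mono (fun y => by rw [id]; linarith [(abs_le.1 (hbound y)).1])
      (tendsto_atTop_add_const_right _ (a - q ^ 2 * C) (tendsto_id.const_mul_atTop hq'))
  have hbot : Tendsto f atBot atBot :=
    tendsto_atBot_mono (fun y => by rw [id]; linarith [(abs_le.1 (hbound y)).2])
      (tendsto_atBot_add_const_right _ (a + q ^ 2 * C) (tendsto_id.const_mul_atBot hq'))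
  have hproper : IsProperMap f := isProperMap_iff_tendsto_cocompact.2 ⟨hf, by
    rw [cocompact_eq_atBot_atTop]
    exact (hbot.mono_right le_sup_left).sup (htop.mono_right le_sup_right)⟩
  exact ⟨hproper.isCompact_preimage isCompact_singleton, hf.surjective htop hbot (a + s)⟩

theorem coe_rep (x : AddCircle (1 : ℝ)) : ((rep x : ℝ) : AddCircle (1 : ℝ)) = x :=
  AddCircle.coe_equivIco

theorem exists_eq_add_intCast_of_coe_eq {a b : ℝ} (h : (a : AddCircle (1 : ℝ)) = b) :
    ∃ n : ℤ, b = a + n := by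
  obtain ⟨n, hn⟩ := (AddCircle.coe_eq_zero_iff 1).1
    (by rw [AddCircle.coe_sub, h, sub_self] : ((b - a : ℝ) : AddCircle (1 : ℝ)) = 0)
  exact ⟨n, by simp at hn; linarith⟩

theorem liftMap_add_intCast (hp : Periodic G 1) (Z : ℝ × ℝ) (n : ℤ) :
    liftMap G (Z + ((n : ℝ), 0)) = liftMap G Z + ((n : ℝ), 0) := by
  have := hp.int_mul n Z.1
  simp only [mul_one] at this
  simp only [liftMap, Prod.fst_add, Prod.snd_add, add_zero, this, Prod.mk_add_mk]
  ring_nf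

theorem iterate_liftMap_add_intCast (hp : Periodic G 1) (Z : ℝ × ℝ) (n : ℤ) (k : ℕ) :
    (liftMap G)^[k] (Z + ((n : ℝ), 0)) = (liftMap G)^[k] Z + ((n : ℝ), 0) :=
  ((Semiconj.iterate_right (f := (· + ((n : ℝ), 0)))
    (fun Z => (liftMap_add_intCast hp Z n).symm) k) Z).symm

theorem projCyl_liftMap (hp : Periodic G 1) (Z : ℝ × ℝ) :
    projCyl (liftMap G Z) = inducedMap G (projCyl Z) := by
  obtain ⟨n, hn⟩ := exists_eq_add_intCast_of_coe_eq (coe_rep (Z.1 : AddCircle (1 : ℝ))).symm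
  have hG : G (rep Z.1) = G Z.1 := by rw [hn]; simpa using hp.int_mul n Z.1
  simp only [projCyl, inducedMap, liftMap, hG, add_assoc, AddCircle.coe_add]

theorem mem_projCyl_image_iff {S : Set (ℝ × ℝ)} (hS : ∀ Z ∈ S, ∀ n : ℤ, Z + ((n : ℝ), 0) ∈ S)
    (x : AddCircle (1 : ℝ)) (y : ℝ) : (x, y) ∈ projCyl '' S ↔ (rep x, y) ∈ S := by
  refine ⟨fun ⟨Z, hZ, hZxy⟩ => ?_, fun h => ⟨(rep x, y), h, by simp [projCyl, coe_rep]⟩⟩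
  simp only [projCyl, Prod.mk.injEq] at hZxy
  obtain ⟨n, hn⟩ := exists_eq_add_intCast_of_coe_eq (hZxy.1.trans (coe_rep x).symm)
  convert hS Z hZ n using 1
  ext <;> simp [hn, hZxy.2]

theorem iterate_liftMap_fst_add_intCast (hp : Periodic G 1) {s : ℤ} {q : ℕ} {Z : ℝ × ℝ}
    (hZ : ((liftMap G)^[q] Z).1 = Z.1 + s) (n : ℤ) :
    ((liftMap G)^[q] (Z + ((n : ℝ), 0))).1 = (Z + ((n : ℝ), 0)).1 + s := by
  simp only [iterate_liftMap_add_intCast hp, Prod.fst_add, hZ]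
  ring

theorem setOf_mem_Kset (hp : Periodic G 1) (s : ℤ) (q : ℕ) (x : AddCircle (1 : ℝ)) :
    {y | (x, y) ∈ Kset G s q} = liftFiber G s q (rep x) :=
  ext fun y => mem_projCyl_image_iff (S := {Z | ((liftMap G)^[q] Z).1 = Z.1 + s})
    (fun _ hZ => iterate_liftMap_fst_add_intCast hp hZ) x y

theorem setOf_mem_image_Kset (hp : Periodic G 1) (s : ℤ) (q : ℕ) (x : AddCircle (1 : ℝ)) :
    {y | (x, y) ∈ (inducedMap G)^[q] '' Kset G s q}
      = (fun y => ((liftMap G)^[q] (rep x, y)).2) '' liftFiber G s q (rep x) := by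
  set K := {Z : ℝ × ℝ | ((liftMap G)^[q] Z).1 = Z.1 + s}
  have himage : (inducedMap G)^[q] '' Kset G s q = projCyl '' ((liftMap G)^[q] '' K) := by
    rw [Kset, image_image, image_image]
    exact image_congr fun Z _ => ((Semiconj.iterate_right (projCyl_liftMap hp) q) Z).symm
  have hinv : ∀ W ∈ (liftMap G)^[q] '' K, ∀ n : ℤ, W + ((n : ℝ), 0) ∈ (liftMap G)^[q] '' K :=
    fun _ ⟨Z, hZ, hW⟩ n => ⟨_, iterate_liftMap_fst_add_intCast hp hZ n,
      by rw [iterate_liftMap_add_intCast hp, hW]⟩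
  ext y
  change (x, y) ∈ (inducedMap G)^[q] '' Kset G s q ↔ _
  rw [himage, mem_projCyl_image_iff hinv]
  constructor
  · rintro ⟨Z, hZ, hZxy⟩
    have hZ' : Z + ((s : ℝ), 0) = (rep x, Z.2) := by
      have h1 : ((liftMap G)^[q] Z).1 = Z.1 + s := hZ
      have h2 := congrArg Prod.fst hZxy
      refine Prod.ext ?_ (add_zero _)
      simp only [Prod.fst_add]
      linarith
    refine ⟨Z.2, ?_, ?_⟩
    · change ((liftMap G)^[q] (rep x, Z.2)).1 = rep x + s
      rw [← hZ', iterate_liftMap_add_intCast hp, Prod.fst_add, congrArg Prod.fst hZxy]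
    · change ((liftMap G)^[q] (rep x, Z.2)).2 = y
      rw [← hZ', iterate_liftMap_add_intCast hp, Prod.snd_add, congrArg Prod.snd hZxy, add_zero]
  · rintro ⟨y₀, hy₀, rfl⟩
    refine ⟨(rep x, y₀) + (((-s : ℤ) : ℝ), 0), iterate_liftMap_fst_add_intCast hp hy₀ (-s), ?_⟩
    rw [iterate_liftMap_add_intCast hp]
    ext <;> simp [hy₀.out]

end TwistMap

open TwistMap

theorem muPlus_le_muPlus {G₁ G₂ : ℝ → ℝ} (hG₁ : Continuous G₁) (hG₂ : Continuous G₂)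
    (hp₁ : Periodic G₁ 1) (hp₂ : Periodic G₂ 1) (hle : ∀ x, G₁ x ≤ G₂ x) (s : ℤ) {q : ℕ}
    (hq : 1 ≤ q) (x : AddCircle (1 : ℝ)) : muPlus G₂ s q x ≤ muPlus G₁ s q x := by
  have hb₁ := hp₁.isBounded_of_continuous one_ne_zero hG₁
  rw [muPlus, muPlus, setOf_mem_Kset hp₁, setOf_mem_Kset hp₂]
  refine csSup_le (isCompact_liftFiber_and_nonempty hG₂ (hp₂.isBounded_of_continuous one_ne_zero
    hG₂) s hq _).2 fun y hy => ?_
  obtain ⟨y', hyy', hx, -⟩ := exists_ge_iterate_liftMap hG₁ hb₁.bddBelow hle hq (rep x) y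
  exact hyy'.trans
    (le_csSup (isCompact_liftFiber_and_nonempty hG₁ hb₁ s hq _).1.bddAbove (hx.trans hy))

theorem muMinus_le_muMinus {G₁ G₂ : ℝ → ℝ} (hG₁ : Continuous G₁) (hG₂ : Continuous G₂)
    (hp₁ : Periodic G₁ 1) (hp₂ : Periodic G₂ 1) (hle : ∀ x, G₁ x ≤ G₂ x) (s : ℤ) {q : ℕ}
    (hq : 1 ≤ q) (x : AddCircle (1 : ℝ)) : muMinus G₂ s q x ≤ muMinus G₁ s q x := by
  have hb₂ := hp₂.isBounded_of_continuous one_ne_zero hG₂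
  rw [muMinus, muMinus, setOf_mem_Kset hp₁, setOf_mem_Kset hp₂]
  refine le_csInf (isCompact_liftFiber_and_nonempty hG₁ (hp₁.isBounded_of_continuous one_ne_zero
    hG₁) s hq _).2 fun y hy => ?_
  obtain ⟨y', hyy', hx, -⟩ := exists_le_iterate_liftMap hG₂ hb₂.bddAbove hle hq (rep x) y
  exact (csInf_le (isCompact_liftFiber_and_nonempty hG₂ hb₂ s hq _).1.bddBelow
    (hx.trans hy)).trans hyy'

theorem nuMinus_le_nuMinus {G₁ G₂ : ℝ → ℝ} (hG₁ : Continuous G₁) (hG₂ : Continuous G₂)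
    (hp₁ : Periodic G₁ 1) (hp₂ : Periodic G₂ 1) (hle : ∀ x, G₁ x ≤ G₂ x) (s : ℤ) {q : ℕ}
    (hq : 1 ≤ q) (x : AddCircle (1 : ℝ)) : nuMinus G₁ s q x ≤ nuMinus G₂ s q x := by
  have hb₁ := hp₁.isBounded_of_continuous one_ne_zero hG₁
  rw [nuMinus, nuMinus, setOf_mem_image_Kset hp₁, setOf_mem_image_Kset hp₂]
  refine le_csInf ((isCompact_liftFiber_and_nonempty hG₂ (hp₂.isBounded_of_continuous one_ne_zero
    hG₂) s hq _).2.image _) ?_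
  rintro _ ⟨y, hy, rfl⟩
  obtain ⟨y', -, hx, hy'⟩ := exists_ge_iterate_liftMap hG₁ hb₁.bddBelow hle hq (rep x) y
  exact (csInf_le ((isCompact_liftFiber_and_nonempty hG₁ hb₁ s hq _).1.image
    (continuous_snd.comp (continuous_iterate_liftMap_mk hG₁ q _))).bddBelow
    ⟨y', hx.trans hy, rfl⟩).trans hy'

theorem nuPlus_le_nuPlus {G₁ G₂ : ℝ → ℝ} (hG₁ : Continuous G₁) (hG₂ : Continuous G₂)
    (hp₁ : Periodic G₁ 1) (hp₂ : Periodic G₂ 1) (hle : ∀ x, G₁ x ≤ G₂ x) (s : ℤ) {q : ℕ}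
    (hq : 1 ≤ q) (x : AddCircle (1 : ℝ)) : nuPlus G₁ s q x ≤ nuPlus G₂ s q x := by
  have hb₂ := hp₂.isBounded_of_continuous one_ne_zero hG₂
  rw [nuPlus, nuPlus, setOf_mem_image_Kset hp₁, setOf_mem_image_Kset hp₂]
  refine csSup_le ((isCompact_liftFiber_and_nonempty hG₁ (hp₁.isBounded_of_continuous one_ne_zero
    hG₁) s hq _).2.image _) ?_
  rintro _ ⟨y, hy, rfl⟩
  obtain ⟨y', -, hx, hy'⟩ := exists_le_iterate_liftMap hG₂ hb₂.bddAbove hle hq (rep x) y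
  exact hy'.trans (le_csSup ((isCompact_liftFiber_and_nonempty hG₂ hb₂ s hq _).1.image
    (continuous_snd.comp (continuous_iterate_liftMap_mk hG₂ q _))).bddAbove
    ⟨y', hx.trans hy, rfl⟩)

theorem IsPositiveTriplet.of_le {G₁ G₂ : ℝ → ℝ} (hG₁ : Continuous G₁) (hG₂ : Continuous G₂)
    (hp₁ : Periodic G₁ 1) (hp₂ : Periodic G₂ 1) (hle : ∀ x, G₁ x ≤ G₂ x) {s p : ℤ} {q : ℕ}
    (hq : 1 ≤ q) (h : IsPositiveTriplet G₁ s p q) : IsPositiveTriplet G₂ s p q := fun x => by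
  linarith [h x, muPlus_le_muPlus hG₁ hG₂ hp₁ hp₂ hle s hq x,
    nuMinus_le_nuMinus hG₁ hG₂ hp₁ hp₂ hle s hq x]

theorem IsNegativeTriplet.of_le {G₁ G₂ : ℝ → ℝ} (hG₁ : Continuous G₁) (hG₂ : Continuous G₂)
    (hp₁ : Periodic G₁ 1) (hp₂ : Periodic G₂ 1) (hle : ∀ x, G₁ x ≤ G₂ x) {s p : ℤ} {q : ℕ}
    (hq : 1 ≤ q) (h : IsNegativeTriplet G₂ s p q) : IsNegativeTriplet G₁ s p q := fun x => by
  linarith [h x, muMinus_le_muMinus hG₁ hG₂ hp₁ hp₂ hle s hq x,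
    nuPlus_le_nuPlus hG₁ hG₂ hp₁ hp₂ hle s hq x]

theorem stmt12_general (g₁ g₂ : ℝ → ℝ)
    (hLip₁ : ∃ K, LipschitzWith K g₁) (hLip₂ : ∃ K, LipschitzWith K g₂)
    (hper₁ : ∀ x, g₁ (x + 1) = g₁ x) (hper₂ : ∀ x, g₂ (x + 1) = g₂ x)
    (lam₁ lam₂ : ℝ) (hle : ∀ x, g₁ x + lam₁ ≤ g₂ x + lam₂)
    (s p : ℤ) (q : ℕ) (hq : 1 ≤ q) :
    (IsPositiveTriplet (fun x => g₁ x + lam₁) s p q →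
      IsPositiveTriplet (fun x => g₂ x + lam₂) s p q) ∧
    (IsNegativeTriplet (fun x => g₂ x + lam₂) s p q →
      IsNegativeTriplet (fun x => g₁ x + lam₁) s p q) := by
  obtain ⟨K₁, hK₁⟩ := hLip₁
  obtain ⟨K₂, hK₂⟩ := hLip₂
  have hc₁ : Continuous fun x => g₁ x + lam₁ := hK₁.continuous.add continuous_const
  have hc₂ : Continuous fun x => g₂ x + lam₂ := hK₂.continuous.add continuous_const
  have hp₁ : Periodic (fun x => g₁ x + lam₁) 1 := fun x => by simp only [hper₁]
  have hp₂ : Periodic (fun x => g₂ x + lam₂) 1 := fun x => by simp only [hper₂]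
  exact ⟨IsPositiveTriplet.of_le hc₁ hc₂ hp₁ hp₂ hle hq,
    IsNegativeTriplet.of_le hc₁ hc₂ hp₁ hp₂ hle hq⟩

/-- if T̃₁ ≤ T̃₂ then positive triplets of T̃₁ are positive for T̃₂ and
negative triplets of T̃₂ are negative for T̃₁. -/
theorem stmt12 (g₁ g₂ : ℝ → ℝ)
    (hLip₁ : ∃ K, LipschitzWith K g₁) (hLip₂ : ∃ K, LipschitzWith K g₂)
    (hper₁ : ∀ x, g₁ (x + 1) = g₁ x) (hper₂ : ∀ x, g₂ (x + 1) = g₂ x)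
    (hint₁ : ∫ x in (0:ℝ)..1, g₁ x = 0) (hint₂ : ∫ x in (0:ℝ)..1, g₂ x = 0)
    (lam₁ lam₂ : ℝ) (hle : ∀ x, g₁ x + lam₁ ≤ g₂ x + lam₂)
    (s p : ℤ) (q : ℕ) (hq : 1 ≤ q) :
    (IsPositiveTriplet (fun x => g₁ x + lam₁) s p q →
      IsPositiveTriplet (fun x => g₂ x + lam₂) s p q) ∧
    (IsNegativeTriplet (fun x => g₂ x + lam₂) s p q →
      IsNegativeTriplet (fun x => g₁ x + lam₁) s p q) :=
  stmt12_general g₁ g₂ hLip₁ hLip₂ hper₁ hper₂ lam₁ lam₂ hle s p q hq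

end
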